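/- Let T be a finite simplicial complex of dimension n that is a pseudomanifold, and let σ be a simplex of codimension at least 2. Then the link of σ in T is itself a pseudomanifold (of dimension n − dim σ − 1): every simplex of the link is a face of a top-dimensional simplex of the link, and every codimension-1 simplex of the link is a face of exactly two top-dimensional simplices of the link. -/

import Mathlib

open Geometry

/-- `K` is an `n`-dimensional pseudomanifold: every face is contained in a face with `n + 1`
vertices, and every face with `n` vertices is contained in exactly two faces with `n + 1`
vertices. -/
def IsPseudomanifold {E : Type} [DecidableEq E] [AddCommGroup E] [Module ℝ E]
    (K : SimplicialComplex ℝ E) (n : ℕ) : Prop :=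
  (∀ s ∈ K.faces, s.card ≤ n + 1) ∧
  (∀ s ∈ K.faces, ∃ t ∈ K.faces, t.card = n + 1 ∧ s ⊆ t) ∧
  (∀ s ∈ K.faces, s.card = n → {t ∈ K.faces | t.card = n + 1 ∧ s ⊆ t}.ncard = 2)

/-- The link of a simplex `σ`: all faces disjoint from `σ` whose join with `σ` is a face. -/
def simplicialLink {E : Type} [DecidableEq E] [AddCommGroup E] [Module ℝ E]
    (K : SimplicialComplex ℝ E) (σ : Finset E) : Set (Finset E) :=
  {τ ∈ K.faces | Disjoint τ σ ∧ τ ∪ σ ∈ K.faces}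

open Finset

/-!
Removing `σ` is a bijection `t ↦ t \ σ`, with inverse `u ↦ u ∪ σ`, from the faces of `K`
containing `τ ∪ σ` onto the faces of the link of `σ` containing `τ`, and it lowers cardinality
by `σ.card`. So the top faces of the link containing `τ` correspond to the top faces of `K`
containing the face `τ ∪ σ`, and both pseudomanifold conditions transfer from `K` to the link.
-/

section Link

variable {E : Type} [DecidableEq E] [AddCommGroup E] [Module ℝ E] {K : SimplicialComplex ℝ E}
  {σ τ : Finset E}

theorem card_union_of_mem_simplicialLink (hτ : τ ∈ simplicialLink K σ) :
    (τ ∪ σ).card = τ.card + σ.card :=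
  card_union_of_disjoint hτ.2.1

theorem sdiff_mem_simplicialLink {t : Finset E} (ht : t ∈ K.faces) (hσt : σ ⊆ t)
    (htσ : ¬t ⊆ σ) : t \ σ ∈ simplicialLink K σ :=
  ⟨K.down_closed ht sdiff_subset (sdiff_nonempty.2 htσ), sdiff_disjoint,
    by rwa [sdiff_union_of_subset hσt]⟩

theorem image_sdiff_faces_superset_eq (hτ : τ ∈ simplicialLink K σ) (m : ℕ) :
    (· \ σ) '' {t ∈ K.faces | t.card = m ∧ τ ∪ σ ⊆ t} =
      {u ∈ simplicialLink K σ | u.card = m - σ.card ∧ τ ⊆ u} := by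
  have hτne : τ.Nonempty := K.nonempty_of_mem_faces hτ.1
  ext u
  constructor
  · rintro ⟨t, ⟨ht, rfl, hsub⟩, rfl⟩
    obtain ⟨hτt, hσt⟩ := union_subset_iff.1 hsub
    have htσ : ¬t ⊆ σ := fun htσ =>
      hτne.ne_empty (disjoint_self_iff_empty _ |>.1 (hτ.2.1.mono_right (hτt.trans htσ)))
    exact ⟨sdiff_mem_simplicialLink ht hσt htσ, card_sdiff_of_subset hσt,
      subset_sdiff.2 ⟨hτt, hτ.2.1⟩⟩
  · rintro ⟨hu, hcard, hτu⟩
    have hupos : 0 < u.card := card_pos.2 (K.nonempty_of_mem_faces hu.1)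
    refine ⟨u ∪ σ, ⟨hu.2.2, ?_, union_subset_union_left hτu⟩, union_sdiff_cancel_right hu.2.1⟩
    rw [card_union_of_mem_simplicialLink hu]
    omega

theorem ncard_simplicialLink_superset (hτ : τ ∈ simplicialLink K σ) (m : ℕ) :
    {u ∈ simplicialLink K σ | u.card = m - σ.card ∧ τ ⊆ u}.ncard =
      {t ∈ K.faces | t.card = m ∧ τ ∪ σ ⊆ t}.ncard := by
  rw [← image_sdiff_faces_superset_eq hτ m]
  refine Set.InjOn.ncard_image fun t₁ ht₁ t₂ ht₂ h => ?_
  rw [← sdiff_union_of_subset (union_subset_iff.1 ht₁.2.2).2,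
    ← sdiff_union_of_subset (union_subset_iff.1 ht₂.2.2).2]
  exact congrArg (· ∪ σ) h

end Link

theorem link_of_codim_ge_two_simplex_is_pseudomanifold_general
    {E : Type} [DecidableEq E] [AddCommGroup E] [Module ℝ E]
    (K : SimplicialComplex ℝ E) (n : ℕ)
    (hpm : IsPseudomanifold K n)
    (σ : Finset E) :
    (∀ τ ∈ simplicialLink K σ, τ.card ≤ n + 1 - σ.card) ∧
    (∀ τ ∈ simplicialLink K σ, ∃ t ∈ simplicialLink K σ, t.card = n + 1 - σ.card ∧ τ ⊆ t) ∧
    (∀ τ ∈ simplicialLink K σ, τ.card = n - σ.card →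
      {t ∈ simplicialLink K σ | t.card = n + 1 - σ.card ∧ τ ⊆ t}.ncard = 2) := by
  obtain ⟨hbound, hpure, hthin⟩ := hpm
  refine ⟨fun τ hτ => ?_, fun τ hτ => ?_, fun τ hτ hcard => ?_⟩
  · have hjoin := hbound _ hτ.2.2
    rw [card_union_of_mem_simplicialLink hτ] at hjoin
    omega
  · obtain ⟨t, ht, hcard, hsub⟩ := hpure _ hτ.2.2
    have hlink : t \ σ ∈ {u ∈ simplicialLink K σ | u.card = n + 1 - σ.card ∧ τ ⊆ u} :=
      image_sdiff_faces_superset_eq hτ (n + 1) ▸ Set.mem_image_of_mem _ ⟨ht, hcard, hsub⟩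
    exact ⟨t \ σ, hlink.1, hlink.2⟩
  · -- `τ` is a nonempty face, so the subtraction in `n - σ.card` does not truncate.
    have hτpos : 0 < τ.card := card_pos.2 (K.nonempty_of_mem_faces hτ.1)
    rw [ncard_simplicialLink_superset hτ]
    exact hthin _ hτ.2.2 (by rw [card_union_of_mem_simplicialLink hτ]; omega)

/-- In a finite `n`-dimensional pseudomanifold, the link of a simplex `σ` of codimension at
least `2` is itself a pseudomanifold of dimension `n - dim σ - 1`: every face of the link is
contained in a face of the link with `n + 1 - σ.card` vertices (dimension `n - dim σ - 1`),
and every face of the link with `n - σ.card` vertices is contained in exactly two such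
top-dimensional faces of the link. -/
theorem link_of_codim_ge_two_simplex_is_pseudomanifold
    {E : Type} [DecidableEq E] [AddCommGroup E] [Module ℝ E]
    (K : SimplicialComplex ℝ E) (n : ℕ)
    (hfin : K.faces.Finite) (hpm : IsPseudomanifold K n)
    (σ : Finset E) (hσ : σ ∈ K.faces) (hcodim : σ.card + 2 ≤ n + 1) :
    (∀ τ ∈ simplicialLink K σ, τ.card ≤ n + 1 - σ.card) ∧
    (∀ τ ∈ simplicialLink K σ, ∃ t ∈ simplicialLink K σ, t.card = n + 1 - σ.card ∧ τ ⊆ t) ∧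
    (∀ τ ∈ simplicialLink K σ, τ.card = n - σ.card →
      {t ∈ simplicialLink K σ | t.card = n + 1 - σ.card ∧ τ ⊆ t}.ncard = 2) :=
  link_of_codim_ge_two_simplex_is_pseudomanifold_general K n hpm σ
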